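/- arXiv:2508.01448 — 2 statements merged into one kernel-verified Lean document; each statement's English description precedes it below -/
import Mathlib

section
/- The function Γ(W) = W² on (0,∞) is not homogeneous of degree 1, and there is an explicit attack: with adversarial resource W^A(t) = 1 and honest resource W^H(t) = 2 on [0,1], the honest chain has weight ∫₀¹ (2)² dt = 4, while the adversary, squeezing time by factor 8 (pretending to have mined in time 1/8 with rate 8), obtains weight (1/8)·(8·1)² = 8 > 4. -/
/-- Γ(W) = W² is not homogeneous of degree 1, and the explicit squeezing attack:
honest weight ∫₀¹ 2² dt = 4, adversarial squeezed weight (1/8)·(8·1)² = 8 > 4. -/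
theorem stmt_10 :
    (¬ ∀ α w : ℝ, 0 < α → 0 < w → (α * w) ^ 2 = α * w ^ 2) ∧
    (∫ _t in (0:ℝ)..1, ((2:ℝ)) ^ 2) = 4 ∧
    ((1:ℝ) / 8) * ((8:ℝ) * 1) ^ 2 = 8 ∧
    (4:ℝ) < 8 := by
  refine ⟨fun h => ?_, ?_, by norm_num, by norm_num⟩
  · have := h 2 1 (by norm_num) (by norm_num)
    norm_num at this
  · simp [intervalIntegral.integral_const]
    norm_num
end

section
/- Let Γ : (0,∞)³ → (0,∞) be monotonically increasing, homogeneous of degree 1 in (V, W), and subhomogeneous in S (Γ(αS, V, W) ≤ α·Γ(S, V, W) for α ≥ 1). Let S, V, W : (a,b) → (0,∞) be resources on a block spanning (a,b), with S_max ≤ ξ·S_min, V_max ≤ ξ·V_min, W_max ≤ ξ·W_min for ξ ≥ 1 (where min/max denote inf/sup of the resource over (a,b)). Then for any recorded space value s_b with S_min ≤ s_b ≤ S_max: Γ(s_b, ∫_a^b V, ∫_a^b W) ≥ (1/ξ²)·∫_a^b Γ(S(t), V(t), W(t)) dt. -/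
/-!
ξ-smoothness together with subhomogeneity in `S` and homogeneity in `(V, W)` bounds the
continuous weight pointwise on the block by `ξ² · Γ(s_b, V_min, W_min)`, so its integral is at
most `(b - a) ξ² Γ(s_b, V_min, W_min)`. On the other hand `∫ V ≥ (b - a) V_min` and
`∫ W ≥ (b - a) W_min`, so by homogeneity and monotonicity the block weight
`Γ(s_b, ∫ V, ∫ W)` is at least `(b - a) Γ(s_b, V_min, W_min)`.
-/

open MeasureTheory

/-- Infimum of a resource over a block timespan (a,b). -/
noncomputable def blockInf (f : ℝ → ℝ) (a b : ℝ) : ℝ := sInf (f '' Set.Ioo a b)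

/-- Supremum of a resource over a block timespan (a,b). -/
noncomputable def blockSup (f : ℝ → ℝ) (a b : ℝ) : ℝ := sSup (f '' Set.Ioo a b)

open Set

lemma le_blockSup {f : ℝ → ℝ} {a b t : ℝ} (hf : BddAbove (f '' Ioo a b)) (ht : t ∈ Ioo a b) :
    f t ≤ blockSup f a b :=
  le_csSup hf (mem_image_of_mem f ht)

lemma blockInf_le {f : ℝ → ℝ} {a b t : ℝ} (hf : BddBelow (f '' Ioo a b)) (ht : t ∈ Ioo a b) :
    blockInf f a b ≤ f t :=
  csInf_le hf (mem_image_of_mem f ht)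

lemma weight_le_sq_mul_of_le_mul {Γ : ℝ → ℝ → ℝ → ℝ}
    (hmono : ∀ s v w s' v' w' : ℝ, 0 < s → 0 < v → 0 < w →
      s ≤ s' → v ≤ v' → w ≤ w' → Γ s v w ≤ Γ s' v' w')
    (hhom : ∀ s v w α : ℝ, 0 < s → 0 < v → 0 < w → 0 < α →
      Γ s (α * v) (α * w) = α * Γ s v w)
    (hsub : ∀ s v w α : ℝ, 0 < s → 0 < v → 0 < w → 1 ≤ α →
      Γ (α * s) v w ≤ α * Γ s v w)
    {ξ s v w s' v' w' : ℝ} (hξ : 1 ≤ ξ) (hs : 0 < s) (hv : 0 < v) (hw : 0 < w)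
    (hs' : 0 < s') (hv' : 0 < v') (hw' : 0 < w')
    (hss' : s ≤ ξ * s') (hvv' : v ≤ ξ * v') (hww' : w ≤ ξ * w') :
    Γ s v w ≤ ξ ^ 2 * Γ s' v' w' := by
  have hξ₀ : 0 < ξ := zero_lt_one.trans_le hξ
  calc Γ s v w ≤ Γ (ξ * s') (ξ * v') (ξ * w') := hmono _ _ _ _ _ _ hs hv hw hss' hvv' hww'
    _ = ξ * Γ (ξ * s') v' w' := hhom _ _ _ _ (by positivity) hv' hw' hξ₀
    _ ≤ ξ * (ξ * Γ s' v' w') := by gcongr; exact hsub _ _ _ _ hs' hv' hw' hξ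
    _ = ξ ^ 2 * Γ s' v' w' := by ring

lemma mul_weight_le_of_mul_le {Γ : ℝ → ℝ → ℝ → ℝ}
    (hmono : ∀ s v w s' v' w' : ℝ, 0 < s → 0 < v → 0 < w →
      s ≤ s' → v ≤ v' → w ≤ w' → Γ s v w ≤ Γ s' v' w')
    (hhom : ∀ s v w α : ℝ, 0 < s → 0 < v → 0 < w → 0 < α →
      Γ s (α * v) (α * w) = α * Γ s v w)
    {c s v w v' w' : ℝ} (hc : 0 < c) (hs : 0 < s) (hv : 0 < v) (hw : 0 < w)
    (hvv' : c * v ≤ v') (hww' : c * w ≤ w') :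
    c * Γ s v w ≤ Γ s v' w' := by
  rw [← hhom s v w c hs hv hw hc]
  exact hmono _ _ _ _ _ _ hs (by positivity) (by positivity) le_rfl hvv' hww'

theorem stmt_13_general (Γ : ℝ → ℝ → ℝ → ℝ)
    (hmono : ∀ s v w s' v' w' : ℝ, 0 < s → 0 < v → 0 < w →
      s ≤ s' → v ≤ v' → w ≤ w' → Γ s v w ≤ Γ s' v' w')
    (hhom : ∀ s v w α : ℝ, 0 < s → 0 < v → 0 < w → 0 < α →
      Γ s (α * v) (α * w) = α * Γ s v w)
    (hsub : ∀ s v w α : ℝ, 0 < s → 0 < v → 0 < w → 1 ≤ α →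
      Γ (α * s) v w ≤ α * Γ s v w)
    (a b : ℝ) (hab : a < b)
    (S V W : ℝ → ℝ)
    (hSpos : ∀ t ∈ Set.Ioo a b, 0 < S t)
    (hVpos : ∀ t ∈ Set.Ioo a b, 0 < V t)
    (hWpos : ∀ t ∈ Set.Ioo a b, 0 < W t)
    (hSinf : 0 < blockInf S a b) (hVinf : 0 < blockInf V a b)
    (hWinf : 0 < blockInf W a b)
    (hSbd : BddAbove (S '' Set.Ioo a b)) (hVbd : BddAbove (V '' Set.Ioo a b))
    (hWbd : BddAbove (W '' Set.Ioo a b))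
    (hVint : IntervalIntegrable V volume a b)
    (hWint : IntervalIntegrable W volume a b)
    (hΓint : IntervalIntegrable (fun t => Γ (S t) (V t) (W t)) volume a b)
    (ξ : ℝ) (hξ : 1 ≤ ξ)
    (hSsm : blockSup S a b ≤ ξ * blockInf S a b)
    (hVsm : blockSup V a b ≤ ξ * blockInf V a b)
    (hWsm : blockSup W a b ≤ ξ * blockInf W a b)
    (sb : ℝ) (hsb₁ : blockInf S a b ≤ sb) :
    (1 / ξ ^ 2) * (∫ t in a..b, Γ (S t) (V t) (W t)) ≤
      Γ sb (∫ t in a..b, V t) (∫ t in a..b, W t) := by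
  set Vm := blockInf V a b
  set Wm := blockInf W a b
  have hsb : 0 < sb := hSinf.trans_le hsb₁
  have hSsb : ξ * blockInf S a b ≤ ξ * sb := by gcongr
  have hpointwise : ∀ t ∈ Ioo a b, Γ (S t) (V t) (W t) ≤ ξ ^ 2 * Γ sb Vm Wm := fun t ht =>
    weight_le_sq_mul_of_le_mul hmono hhom hsub hξ (hSpos t ht) (hVpos t ht) (hWpos t ht)
      hsb hVinf hWinf ((le_blockSup hSbd ht).trans (hSsm.trans hSsb))
      ((le_blockSup hVbd ht).trans hVsm) ((le_blockSup hWbd ht).trans hWsm)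
  have hupper : ∫ t in a..b, Γ (S t) (V t) (W t) ≤ ξ ^ 2 * ((b - a) * Γ sb Vm Wm) := by
    simpa using intervalIntegral.integral_mono_on_of_le_Ioo hab.le hΓint
      intervalIntegrable_const hpointwise
  have hlower {f : ℝ → ℝ} (hpos : ∀ t ∈ Ioo a b, 0 < f t) (hf : IntervalIntegrable f volume a b) :
      (b - a) * blockInf f a b ≤ ∫ t in a..b, f t := by
    have hbdd : BddBelow (f '' Ioo a b) := ⟨0, by rintro _ ⟨t, ht, rfl⟩; exact (hpos t ht).le⟩
    simpa using intervalIntegral.integral_mono_on_of_le_Ioo hab.le intervalIntegrable_const hf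
      fun t ht => blockInf_le hbdd ht
  have hblock : (b - a) * Γ sb Vm Wm ≤ Γ sb (∫ t in a..b, V t) (∫ t in a..b, W t) :=
    mul_weight_le_of_mul_le hmono hhom (sub_pos.2 hab) hsb hVinf hWinf
      (hlower hVpos hVint) (hlower hWpos hWint)
  rw [one_div, inv_mul_le_iff₀ (by positivity)]
  calc ∫ t in a..b, Γ (S t) (V t) (W t) ≤ ξ ^ 2 * ((b - a) * Γ sb Vm Wm) := hupper
    _ ≤ ξ ^ 2 * Γ sb (∫ t in a..b, V t) (∫ t in a..b, W t) := by gcongr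

/-- Per-block honest bound: for Γ monotone, homogeneous in (V,W) and
subhomogeneous in S, and ξ-smooth resources on a block (a,b), any recorded
space value s_b between the inf and sup of S satisfies
Γ(s_b, ∫V, ∫W) ≥ (1/ξ²)·∫ Γ(S(t),V(t),W(t)) dt. -/
theorem stmt_13 (Γ : ℝ → ℝ → ℝ → ℝ)
    (hmono : ∀ s v w s' v' w' : ℝ, 0 < s → 0 < v → 0 < w →
      s ≤ s' → v ≤ v' → w ≤ w' → Γ s v w ≤ Γ s' v' w')
    (hhom : ∀ s v w α : ℝ, 0 < s → 0 < v → 0 < w → 0 < α →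
      Γ s (α * v) (α * w) = α * Γ s v w)
    (hsub : ∀ s v w α : ℝ, 0 < s → 0 < v → 0 < w → 1 ≤ α →
      Γ (α * s) v w ≤ α * Γ s v w)
    (a b : ℝ) (hab : a < b)
    (S V W : ℝ → ℝ)
    (hSpos : ∀ t ∈ Set.Ioo a b, 0 < S t)
    (hVpos : ∀ t ∈ Set.Ioo a b, 0 < V t)
    (hWpos : ∀ t ∈ Set.Ioo a b, 0 < W t)
    (hSinf : 0 < blockInf S a b) (hVinf : 0 < blockInf V a b)
    (hWinf : 0 < blockInf W a b)
    (hSbd : BddAbove (S '' Set.Ioo a b)) (hVbd : BddAbove (V '' Set.Ioo a b))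
    (hWbd : BddAbove (W '' Set.Ioo a b))
    (hVint : IntervalIntegrable V volume a b)
    (hWint : IntervalIntegrable W volume a b)
    (hΓint : IntervalIntegrable (fun t => Γ (S t) (V t) (W t)) volume a b)
    (ξ : ℝ) (hξ : 1 ≤ ξ)
    (hSsm : blockSup S a b ≤ ξ * blockInf S a b)
    (hVsm : blockSup V a b ≤ ξ * blockInf V a b)
    (hWsm : blockSup W a b ≤ ξ * blockInf W a b)
    (sb : ℝ) (hsb₁ : blockInf S a b ≤ sb) (hsb₂ : sb ≤ blockSup S a b) :
    (1 / ξ ^ 2) * (∫ t in a..b, Γ (S t) (V t) (W t)) ≤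
      Γ sb (∫ t in a..b, V t) (∫ t in a..b, W t) :=
  stmt_13_general Γ hmono hhom hsub a b hab S V W hSpos hVpos hWpos hSinf hVinf hWinf hSbd hVbd hWbd
    hVint hWint hΓint ξ hξ hSsm hVsm hWsm sb hsb₁
end
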